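/- arXiv:0910.4889 — 2 statements merged into one kernel-verified Lean document; each statement's English description precedes it below -/
import Mathlib

section
/- Every track has path-width at most 2. -/
open SimpleGraph

universe u v

/-- A path-decomposition of a simple graph: a finite sequence of bags covering all vertices
and edges, such that bags containing a fixed vertex occur consecutively. -/
structure PathDecomp {V : Type u} (G : SimpleGraph V) where
  n : ℕ
  bag : Fin n → Finset V
  mem_bag : ∀ v : V, ∃ i, v ∈ bag i
  edge_bag : ∀ ⦃u w : V⦄, G.Adj u w → ∃ i, u ∈ bag i ∧ w ∈ bag i
  interp : ∀ i j k : Fin n, i ≤ j → j ≤ k → ∀ v : V, v ∈ bag i → v ∈ bag k → v ∈ bag j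

/-- The width of a path-decomposition: (maximal bag size) - 1. -/
def PathDecomp.width {V : Type u} {G : SimpleGraph V} (D : PathDecomp G) : ℕ :=
  (Finset.univ.sup fun i => (D.bag i).card) - 1

/-- The path-width of a graph: the minimum width of a path-decomposition. -/
noncomputable def pathWidth {V : Type u} (G : SimpleGraph V) : ℕ :=
  sInf {w | ∃ D : PathDecomp G, D.width = w}

/-- `IsMinor G H` : `H` is a minor of `G`, witnessed by a family of pairwise disjoint nonempty
connected branch sets in `G` indexed by the vertices of `H`. -/
def IsMinor {V : Type u} {W : Type v} (G : SimpleGraph V) (H : SimpleGraph W) : Prop :=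
  ∃ B : W → Set V,
    (∀ w, (B w).Nonempty) ∧
    (Pairwise fun w w' => Disjoint (B w) (B w')) ∧
    (∀ w, (G.induce (B w)).Connected) ∧
    (∀ ⦃w w'⦄, H.Adj w w' → ∃ u ∈ B w, ∃ u' ∈ B w', G.Adj u u')

/-- A graph is 2-connected if it has at least 3 vertices and deleting any vertex leaves it
connected. -/
def TwoConnected {V : Type u} (G : SimpleGraph V) : Prop :=
  3 ≤ Nat.card V ∧ ∀ v : V, (G.induce ({v}ᶜ : Set V)).Connected

/-- A graph is 2-edge-connected if it is connected, has at least 2 vertices, and deleting any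
edge leaves it connected. -/
def TwoEdgeConnected {V : Type u} (G : SimpleGraph V) : Prop :=
  G.Connected ∧ 2 ≤ Nat.card V ∧ ∀ e ∈ G.edgeSet, (G.deleteEdges {e}).Connected

/-- A track representation of a graph `G`: two disjoint paths `p 0, …, p (k-1)` and
`q 0, …, q (l-1)`, short chords (edges `p i — q j`) and long chords (paths `p i — m — q j`
with middle vertex `m ∈ M`, recorded by `ends m = (i, j)`), the chords pairwise non-crossing,
with a chord joining the first vertices of the two paths and a chord joining the last ones;
the vertices of `G` are exactly those of the two paths plus the middle vertices, and the
edges of `G` are exactly the path edges and the chord edges. -/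
structure TrackRep {V : Type u} (G : SimpleGraph V) where
  k : ℕ
  l : ℕ
  kpos : 0 < k
  lpos : 0 < l
  p : Fin k → V
  q : Fin l → V
  short : Set (Fin k × Fin l)
  M : Set V
  ends : V → Fin k × Fin l
  M_fin : M.Finite
  p_inj : Function.Injective p
  q_inj : Function.Injective q
  p_ne_q : ∀ i j, p i ≠ q j
  M_ne_p : ∀ ⦃m⦄, m ∈ M → ∀ i, m ≠ p i
  M_ne_q : ∀ ⦃m⦄, m ∈ M → ∀ j, m ≠ q j
  vert_cover : ∀ x : V, (∃ i, x = p i) ∨ (∃ j, x = q j) ∨ x ∈ M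
  noncross : ∀ c ∈ short ∪ ends '' M, ∀ c' ∈ short ∪ ends '' M,
      0 ≤ (((c.1 : ℕ) : ℤ) - ((c'.1 : ℕ) : ℤ)) * (((c.2 : ℕ) : ℤ) - ((c'.2 : ℕ) : ℤ))
  first_chord : (⟨0, kpos⟩, ⟨0, lpos⟩) ∈ short ∪ ends '' M
  last_chord : (⟨k - 1, Nat.sub_lt kpos Nat.one_pos⟩, ⟨l - 1, Nat.sub_lt lpos Nat.one_pos⟩)
      ∈ short ∪ ends '' M
  adj_iff : ∀ u w : V, G.Adj u w ↔
      (∃ i j : Fin k, ((i : ℕ) + 1 = (j : ℕ) ∨ (j : ℕ) + 1 = (i : ℕ)) ∧ u = p i ∧ w = p j) ∨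
      (∃ i j : Fin l, ((i : ℕ) + 1 = (j : ℕ) ∨ (j : ℕ) + 1 = (i : ℕ)) ∧ u = q i ∧ w = q j) ∨
      (∃ c ∈ short, (u = p c.1 ∧ w = q c.2) ∨ (u = q c.2 ∧ w = p c.1)) ∨
      (∃ m ∈ M, (u = m ∧ (w = p (ends m).1 ∨ w = q (ends m).2)) ∨
                (w = m ∧ (u = p (ends m).1 ∨ u = q (ends m).2)))

/-- A graph is a track if it admits a track representation. -/
def IsTrack {V : Type u} (G : SimpleGraph V) : Prop := Nonempty (TrackRep G)

/-- A graph is a partial track if it is (isomorphic to) a subgraph of a track. -/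
def IsPartialTrack {V : Type u} (G : SimpleGraph V) : Prop :=
  ∃ (W : Type) (T : SimpleGraph W) (f : V → W),
    IsTrack T ∧ Function.Injective f ∧ ∀ ⦃a b : V⦄, G.Adj a b → T.Adj (f a) (f b)

/-- `r` can play the role of a corner of `G`: some track representation of `G` has `r`
as one of the four corners `p₁, p_k, q₁, q_ℓ`. -/
def CanBeCorner {V : Type u} (G : SimpleGraph V) (r : V) : Prop :=
  ∃ T : TrackRep G,
    r = T.p ⟨0, T.kpos⟩ ∨ r = T.p ⟨T.k - 1, Nat.sub_lt T.kpos Nat.one_pos⟩ ∨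
    r = T.q ⟨0, T.lpos⟩ ∨ r = T.q ⟨T.l - 1, Nat.sub_lt T.lpos Nat.one_pos⟩

/-- `r` and `r'` can play the role of opposite corners of `G`. -/
def CanBeOppositeCorners {V : Type u} (G : SimpleGraph V) (r r' : V) : Prop :=
  ∃ T : TrackRep G,
    (r = T.p ⟨0, T.kpos⟩ ∨ r = T.q ⟨0, T.lpos⟩) ∧
    (r' = T.p ⟨T.k - 1, Nat.sub_lt T.kpos Nat.one_pos⟩ ∨
     r' = T.q ⟨T.l - 1, Nat.sub_lt T.lpos Nat.one_pos⟩)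

/-- `r` can play the role of a degenerate side of `G`: some track representation has `k = 1`
and `p₁ = r`. -/
def CanBeDegenerateSide {V : Type u} (G : SimpleGraph V) (r : V) : Prop :=
  ∃ T : TrackRep G, T.k = 1 ∧ r = T.p ⟨0, T.kpos⟩

/-- Two edges are equal or lie on a common cycle. -/
def OnCommonCycle {V : Type u} (G : SimpleGraph V) (e f : Sym2 V) : Prop :=
  e = f ∨ ∃ (x : V) (c : G.Walk x x), c.IsCycle ∧ e ∈ c.edges ∧ f ∈ c.edges

/-- The subgraph of `G` spanned by a set `F` of edges. -/
def edgeSpan {V : Type u} (G : SimpleGraph V) (F : Set (Sym2 V)) : G.Subgraph where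
  verts := {a | ∃ b, G.Adj a b ∧ s(a, b) ∈ F}
  Adj a b := G.Adj a b ∧ s(a, b) ∈ F
  adj_sub h := h.1
  edge_vert h := ⟨_, h.1, h.2⟩
  symm := ⟨fun a b h => ⟨h.1.symm, by rw [Sym2.eq_swap]; exact h.2⟩⟩

/-- `B` is a block of `G`: the subgraph spanned by an equivalence class of edges under the
relation "being equal or lying on a common cycle". -/
def IsBlock {V : Type u} (G : SimpleGraph V) (B : G.Subgraph) : Prop :=
  ∃ e ∈ G.edgeSet, B = edgeSpan G {f | OnCommonCycle G e f}

/-- A cut vertex: a vertex whose removal disconnects the (connected) graph. -/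
def IsCutVertex {V : Type u} (G : SimpleGraph V) (v : V) : Prop :=
  G.Connected ∧ ¬ (G.induce ({v}ᶜ : Set V)).Connected

/-- The subgraph `B` of `G` (as an abstract graph) is a track. -/
def SubIsTrack {V : Type u} {G : SimpleGraph V} (B : G.Subgraph) : Prop :=
  IsTrack B.coe

/-- The vertex `r` can play the role of a corner of the subgraph `B`. -/
def SubCanBeCorner {V : Type u} {G : SimpleGraph V} (B : G.Subgraph) (r : V) : Prop :=
  ∃ h : r ∈ B.verts, CanBeCorner B.coe ⟨r, h⟩

/-- The vertices `r, r'` can play the role of opposite corners of the subgraph `B`. -/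
def SubCanBeOppositeCorners {V : Type u} {G : SimpleGraph V} (B : G.Subgraph)
    (r r' : V) : Prop :=
  ∃ (h : r ∈ B.verts) (h' : r' ∈ B.verts), CanBeOppositeCorners B.coe ⟨r, h⟩ ⟨r', h'⟩

/-- The vertex `r` can play the role of a degenerate side of the subgraph `B`. -/
def SubCanBeDegenerateSide {V : Type u} {G : SimpleGraph V} (B : G.Subgraph) (r : V) : Prop :=
  ∃ h : r ∈ B.verts, CanBeDegenerateSide B.coe ⟨r, h⟩

/-- `C` is a longest cycle of `G`. -/
def IsLongestCycle {V : Type u} (G : SimpleGraph V) {x : V} (C : G.Walk x x) : Prop :=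
  C.IsCycle ∧ ∀ (y : V) (D : G.Walk y y), D.IsCycle → D.length ≤ C.length

/-- `N` is (the vertex set of) a connected component of `G − S`. -/
def IsCompOf {V : Type u} (G : SimpleGraph V) (S N : Set V) : Prop :=
  N.Nonempty ∧ N ⊆ Sᶜ ∧ (G.induce N).Connected ∧
    ∀ a ∈ N, ∀ b, b ∉ S → G.Adj a b → b ∈ N

/-- The subgraph consisting of all edges of `G` incident to a vertex of `N`
(together with their endpoints). -/
def bridgeFromComp {V : Type u} (G : SimpleGraph V) (N : Set V) : G.Subgraph where
  verts := {a | ∃ b, G.Adj a b ∧ (a ∈ N ∨ b ∈ N)}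
  Adj a b := G.Adj a b ∧ (a ∈ N ∨ b ∈ N)
  adj_sub h := h.1
  edge_vert h := ⟨_, h.1, h.2⟩
  symm := ⟨fun a b h => ⟨h.1.symm, h.2.symm⟩⟩

/-- `B` is a bridge of the cycle `C` in `G`: either the subgraph of all edges incident to a
component of `G − V(C)`, or a single edge of `G` joining two vertices of `C` and not lying
on `C`. -/
def IsBridgeOf {V : Type u} (G : SimpleGraph V) {x : V} (C : G.Walk x x)
    (B : G.Subgraph) : Prop :=
  (∃ N : Set V, IsCompOf G {a | a ∈ C.support} N ∧ B = bridgeFromComp G N) ∨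
  (∃ (a b : V) (h : G.Adj a b), a ∈ C.support ∧ b ∈ C.support ∧ s(a, b) ∉ C.edges ∧
      B = G.subgraphOfAdj h)

/-- The legs of a bridge `B` of a cycle `C`: the vertices of `B` lying on `C`. -/
def legs {V : Type u} {G : SimpleGraph V} {x : V} (C : G.Walk x x) (B : G.Subgraph) : Set V :=
  {a | a ∈ B.verts ∧ a ∈ C.support}

/-- `z` lies strictly between `a` and `b` in the linear order given by the list `L`. -/
def posBetween {V : Type u} [DecidableEq V] (L : List V) (a b z : V) : Prop :=
  (L.idxOf a < L.idxOf z ∧ L.idxOf z < L.idxOf b) ∨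
  (L.idxOf b < L.idxOf z ∧ L.idxOf z < L.idxOf a)

/-- The pairs `{a₁, a₂}` and `{b₁, b₂}` are crossing pairs on the cyclic order given by the
list `L`: the pairs are disjoint pairs of distinct vertices and the four vertices alternate
cyclically (equivalently, exactly one of `b₁, b₂` lies strictly between `a₁` and `a₂`). -/
def CrossingPairs {V : Type u} [DecidableEq V] (L : List V) (a₁ a₂ b₁ b₂ : V) : Prop :=
  a₁ ≠ a₂ ∧ b₁ ≠ b₂ ∧ a₁ ≠ b₁ ∧ a₁ ≠ b₂ ∧ a₂ ≠ b₁ ∧ a₂ ≠ b₂ ∧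
    Xor' (posBetween L a₁ a₂ b₁) (posBetween L a₁ a₂ b₂)

/-- Two bridges of a cycle `C` cross: some pair of legs of one and some pair of legs of the
other are crossing pairs along `C`. -/
def BridgesCross {V : Type u} [DecidableEq V] {G : SimpleGraph V} {x : V} (C : G.Walk x x)
    (B₁ B₂ : G.Subgraph) : Prop :=
  ∃ a₁ ∈ legs C B₁, ∃ a₂ ∈ legs C B₁, ∃ b₁ ∈ legs C B₂, ∃ b₂ ∈ legs C B₂,
    CrossingPairs C.support.tail a₁ a₂ b₁ b₂

/-! The chords of a track are pairwise comparable in the product order, so a monotone lattice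
path from `(0, 0)` to `(k - 1, l - 1)` passes through all of them: step right unless that crosses a
chord, and then stepping up crosses none. A point reached at time `t` has coordinate sum `t` and
crosses no chord, so the chord `(i, j)` is reached at time `i + j`. Walking along the path, the
step from `(i, j)` to the next point gets the bag formed by `p i`, `q j` and the one new vertex,
preceded by a bag `{p i, q j, m}` for each long chord `p i m q j`. All bags have at most three
vertices, and since the path is monotone, the bags containing `p i` (those met while the path is
in column `i`, and the step into that column) are consecutive. -/

open Finset

namespace PathDecomp

variable {V : Type u} {G : SimpleGraph V}

theorem pathWidth_le_width (D : PathDecomp G) : pathWidth G ≤ D.width :=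
  Nat.sInf_le ⟨D, rfl⟩

theorem width_le {w : ℕ} (D : PathDecomp G) (h : ∀ i, #(D.bag i) ≤ w + 1) : D.width ≤ w := by
  have : (univ.sup fun i => #(D.bag i)) ≤ w + 1 := Finset.sup_le fun i _ => h i
  unfold width
  omega

def ofFinset {ι : Type*} [LinearOrder ι] (S : Finset ι) (B : ι → Finset V)
    (hmem : ∀ v, ∃ x ∈ S, v ∈ B x)
    (hadj : ∀ ⦃u v⦄, G.Adj u v → ∃ x ∈ S, u ∈ B x ∧ v ∈ B x)
    (hinterp : ∀ x ∈ S, ∀ y ∈ S, ∀ z ∈ S, x ≤ y → y ≤ z → ∀ v, v ∈ B x → v ∈ B z → v ∈ B y) :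
    PathDecomp G where
  n := #S
  bag i := B (S.orderIsoOfFin rfl i)
  mem_bag v := by
    obtain ⟨x, hx, hv⟩ := hmem v
    exact ⟨(S.orderIsoOfFin rfl).symm ⟨x, hx⟩, by simpa using hv⟩
  edge_bag u v h := by
    obtain ⟨x, hx, hu, hv⟩ := hadj h
    exact ⟨(S.orderIsoOfFin rfl).symm ⟨x, hx⟩, by simpa using hu, by simpa using hv⟩
  interp i j k hij hjk :=
    hinterp _ (S.orderIsoOfFin rfl i).2 _ (S.orderIsoOfFin rfl j).2 _ (S.orderIsoOfFin rfl k).2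
      ((S.orderIsoOfFin rfl).monotone hij) ((S.orderIsoOfFin rfl).monotone hjk)

end PathDecomp

theorem pathWidth_le_of_bags {V : Type u} {G : SimpleGraph V} {ι : Type*} [LinearOrder ι]
    (S : Finset ι) (B : ι → Finset V) {w : ℕ}
    (hmem : ∀ v, ∃ x ∈ S, v ∈ B x)
    (hadj : ∀ ⦃u v⦄, G.Adj u v → ∃ x ∈ S, u ∈ B x ∧ v ∈ B x)
    (hinterp : ∀ x ∈ S, ∀ y ∈ S, ∀ z ∈ S, x ≤ y → y ≤ z → ∀ v, v ∈ B x → v ∈ B z → v ∈ B y)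
    (hcard : ∀ x ∈ S, #(B x) ≤ w + 1) :
    pathWidth G ≤ w :=
  let D := PathDecomp.ofFinset S B hmem hadj hinterp
  D.pathWidth_le_width.trans (D.width_le fun i => hcard _ (S.orderIsoOfFin rfl i).2)

theorem Nat.exists_lt_eq_and_succ_eq {f : ℕ → ℕ} (hf : ∀ t, f (t + 1) ≤ f t + 1) {i n : ℕ}
    (h₀ : f 0 ≤ i) (hn : i < f n) : ∃ t < n, f t = i ∧ f (t + 1) = i + 1 := by
  induction n with
  | zero => omega
  | succ n ih =>
    by_cases h : i < f n
    · obtain ⟨t, ht, hft⟩ := ih h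
      exact ⟨t, by omega, hft⟩
    · have := hf n
      exact ⟨n, by omega, by omega, by omega⟩

theorem Nat.exists_le_eq {f : ℕ → ℕ} (hf : ∀ t, f (t + 1) ≤ f t + 1) {i n : ℕ}
    (h₀ : f 0 ≤ i) (hn : i ≤ f n) : ∃ t ≤ n, f t = i := by
  rcases hn.lt_or_eq with hn | hn
  · obtain ⟨t, ht, hft, -⟩ := Nat.exists_lt_eq_and_succ_eq hf h₀ hn
    exact ⟨t, ht.le, hft⟩
  · exact ⟨n, le_rfl, hn.symm⟩

/-- Read `(t, ⊤)` as the step of the walk `f` from time `t` to `t + 1` and `(t, s)`, `s ≠ ⊤`,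
as a halt at time `t`: the moments at which a monotone walk is at `a` form an interval. -/
theorem Monotone.ordConnected_setOf_lex {α β : Type*} [PartialOrder α] [PartialOrder β]
    [OrderTop β] {f : ℕ → α} (hf : Monotone f) (a : α) :
    Set.OrdConnected
      {x : ℕ ×ₗ β | f (ofLex x).1 = a ∨ ((ofLex x).2 = ⊤ ∧ f ((ofLex x).1 + 1) = a)} := by
  refine ⟨fun x hx z hz y ⟨hxy, hyz⟩ => ?_⟩
  have h₂₃ : (ofLex y).1 ≤ (ofLex z).1 := Prod.Lex.monotone_fst_ofLex hyz
  rcases Prod.Lex.le_iff.mp hxy with h₁₂ | ⟨h₁₂, hs⟩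
  · have hle : a ≤ f (ofLex y).1 := by
      rcases hx with hx | hx
      · exact hx ▸ hf h₁₂.le
      · exact hx.2 ▸ hf h₁₂
    have hge : f (ofLex y).1 ≤ a := by
      rcases hz with hz | hz
      · exact hz ▸ hf h₂₃
      · exact hz.2 ▸ hf (h₂₃.trans (Nat.le_succ _))
    exact Or.inl (le_antisymm hge hle)
  · rcases hx with hx | ⟨hx, hfx⟩
    · exact Or.inl (h₁₂ ▸ hx)
    · exact Or.inr ⟨top_le_iff.mp (hx ▸ hs), h₁₂ ▸ hfx⟩

def Crosses (c c' : ℕ × ℕ) : Prop :=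
  (c.1 < c'.1 ∧ c'.2 < c.2) ∨ (c'.1 < c.1 ∧ c.2 < c'.2)

namespace Staircase

open Classical in
noncomputable def step (C : Set (ℕ × ℕ)) (x : ℕ × ℕ) : ℕ × ℕ :=
  if ∀ c ∈ C, ¬Crosses c (x.1 + 1, x.2) then (x.1 + 1, x.2) else (x.1, x.2 + 1)

noncomputable def path (C : Set (ℕ × ℕ)) (t : ℕ) : ℕ × ℕ := (step C)^[t] (0, 0)

variable {C : Set (ℕ × ℕ)}

theorem path_zero : path C 0 = (0, 0) := rfl

theorem path_succ (t : ℕ) :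
    path C (t + 1) = ((path C t).1 + 1, (path C t).2) ∨
      path C (t + 1) = ((path C t).1, (path C t).2 + 1) := by
  rw [path, Function.iterate_succ_apply', ← path, step]
  split_ifs <;> simp

theorem path_fst_add_snd (t : ℕ) : (path C t).1 + (path C t).2 = t := by
  induction t with
  | zero => rfl
  | succ t ih => rcases path_succ (C := C) t with h | h <;> rw [h] <;> omega

theorem monotone_path : Monotone (path C) :=
  monotone_nat_of_le_succ fun t => by
    rcases path_succ (C := C) t with h | h <;> rw [h, Prod.mk_le_mk] <;> omega

variable (hC : ∀ c ∈ C, ∀ c' ∈ C, ¬Crosses c c')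
include hC

/-- If both the step right and the step up crossed some pair of `C`, these two pairs would
cross each other. -/
theorem not_crosses_step {x : ℕ × ℕ} (hx : ∀ c ∈ C, ¬Crosses c x) :
    ∀ c ∈ C, ¬Crosses c (step C x) := by
  rw [step]
  split_ifs with hright
  · exact hright
  · push Not at hright
    obtain ⟨c, hc, hcross⟩ := hright
    intro c' hc' hcross'
    have hcx := hx c hc
    have hc'x := hx c' hc'
    have hcc' := hC c hc c' hc'
    simp only [Crosses] at hcross hcross' hcx hc'x hcc'
    omega

theorem not_crosses_path (t : ℕ) : ∀ c ∈ C, ¬Crosses c (path C t) := by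
  induction t with
  | zero => simp [path_zero, Crosses]
  | succ t ih =>
    rw [path, Function.iterate_succ_apply', ← path]
    exact not_crosses_step hC ih

theorem path_le_of_mem {c : ℕ × ℕ} (hc : c ∈ C) {t : ℕ} (ht : t ≤ c.1 + c.2) : path C t ≤ c := by
  have hcross := not_crosses_path hC t c hc
  have hsum := path_fst_add_snd (C := C) t
  rw [Crosses] at hcross
  rw [Prod.le_def]
  omega

theorem path_eq_of_mem {c : ℕ × ℕ} (hc : c ∈ C) : path C (c.1 + c.2) = c := by
  have hle := Prod.le_def.mp (path_le_of_mem hC hc le_rfl)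
  have hsum := path_fst_add_snd (C := C) (c.1 + c.2)
  ext <;> omega

end Staircase

namespace TrackRep

variable {V : Type u} {G : SimpleGraph V} (T : TrackRep G)

def chords : Set (ℕ × ℕ) := (fun c => ((c.1 : ℕ), (c.2 : ℕ))) '' (T.short ∪ T.ends '' T.M)

theorem not_crosses_of_mem_chords : ∀ c ∈ T.chords, ∀ c' ∈ T.chords, ¬Crosses c c' := by
  rintro _ ⟨c, hc, rfl⟩ _ ⟨c', hc', rfl⟩ hcross
  dsimp only [Crosses] at hcross
  have hnc := T.noncross c hc c' hc'
  rcases hcross with ⟨h₁, h₂⟩ | ⟨h₁, h₂⟩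
  · exact hnc.not_gt (mul_neg_of_neg_of_pos (by omega) (by omega))
  · exact hnc.not_gt (mul_neg_of_pos_of_neg (by omega) (by omega))

def stairLength : ℕ := T.k - 1 + (T.l - 1)

theorem path_le_last (t : ℕ) :
    Staircase.path T.chords (min t T.stairLength) ≤ (T.k - 1, T.l - 1) :=
  Staircase.path_le_of_mem T.not_crosses_of_mem_chords ⟨_, T.last_chord, rfl⟩ (min_le_right _ _)

noncomputable def stair (t : ℕ) : Fin T.k × Fin T.l :=
  (⟨(Staircase.path T.chords (min t T.stairLength)).1,
      by have := (Prod.le_def.mp (T.path_le_last t)).1; have := T.kpos; omega⟩,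
    ⟨(Staircase.path T.chords (min t T.stairLength)).2,
      by have := (Prod.le_def.mp (T.path_le_last t)).2; have := T.lpos; omega⟩)

theorem monotone_stair : Monotone T.stair := fun _ _ hst =>
  Staircase.monotone_path (min_le_min_right T.stairLength hst)

theorem coe_stair_zero : ((T.stair 0).1 : ℕ) = 0 ∧ ((T.stair 0).2 : ℕ) = 0 := by
  simp [stair, Staircase.path_zero]

theorem coe_stair_fst (t : ℕ) :
    ((T.stair t).1 : ℕ) = (Staircase.path T.chords (min t T.stairLength)).1 := rfl

theorem coe_stair_snd (t : ℕ) :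
    ((T.stair t).2 : ℕ) = (Staircase.path T.chords (min t T.stairLength)).2 := rfl

theorem stair_succ (t : ℕ) :
    ((T.stair (t + 1)).1 : ℕ) = (T.stair t).1 ∧ ((T.stair (t + 1)).2 : ℕ) ≤ (T.stair t).2 + 1 ∨
      ((T.stair (t + 1)).1 : ℕ) ≤ (T.stair t).1 + 1 ∧
        ((T.stair (t + 1)).2 : ℕ) = (T.stair t).2 := by
  simp only [coe_stair_fst, coe_stair_snd]
  by_cases ht : t < T.stairLength
  · rw [min_eq_left ht, min_eq_left ht.le]
    rcases Staircase.path_succ (C := T.chords) t with h | h <;> simp [h]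
  · rw [min_eq_right (by omega), min_eq_right (by omega)]
    simp

theorem coe_add_coe_le_stairLength (c : Fin T.k × Fin T.l) :
    (c.1 : ℕ) + c.2 ≤ T.stairLength := by
  unfold stairLength
  omega

theorem stair_of_mem {c : Fin T.k × Fin T.l} (hc : c ∈ T.short ∪ T.ends '' T.M) :
    T.stair (c.1 + c.2) = c := by
  have h := Staircase.path_eq_of_mem T.not_crosses_of_mem_chords ⟨c, hc, rfl⟩
  simp only [stair, min_eq_left (T.coe_add_coe_le_stairLength c), h]

theorem coe_stair_stairLength :
    ((T.stair T.stairLength).1 : ℕ) = T.k - 1 ∧ ((T.stair T.stairLength).2 : ℕ) = T.l - 1 := by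
  rw [stairLength, T.stair_of_mem T.last_chord]
  exact ⟨rfl, rfl⟩

theorem coe_stair_fst_succ_le (t : ℕ) : ((T.stair (t + 1)).1 : ℕ) ≤ (T.stair t).1 + 1 := by
  rcases T.stair_succ t with h | h <;> omega

theorem coe_stair_snd_succ_le (t : ℕ) : ((T.stair (t + 1)).2 : ℕ) ≤ (T.stair t).2 + 1 := by
  rcases T.stair_succ t with h | h <;> omega

theorem exists_stair_fst_eq (i : Fin T.k) : ∃ t ≤ T.stairLength, (T.stair t).1 = i := by
  obtain ⟨t, ht, h⟩ := Nat.exists_le_eq (f := fun t => ((T.stair t).1 : ℕ)) (i := i)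
    (n := T.stairLength) T.coe_stair_fst_succ_le (by simp [T.coe_stair_zero])
    (by simp [T.coe_stair_stairLength]; omega)
  exact ⟨t, ht, Fin.ext h⟩

theorem exists_stair_snd_eq (j : Fin T.l) : ∃ t ≤ T.stairLength, (T.stair t).2 = j := by
  obtain ⟨t, ht, h⟩ := Nat.exists_le_eq (f := fun t => ((T.stair t).2 : ℕ)) (i := j)
    (n := T.stairLength) T.coe_stair_snd_succ_le (by simp [T.coe_stair_zero])
    (by simp [T.coe_stair_stairLength]; omega)
  exact ⟨t, ht, Fin.ext h⟩

theorem exists_stair_fst_step {i i' : Fin T.k} (h : (i : ℕ) + 1 = i') :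
    ∃ t ≤ T.stairLength, (T.stair t).1 = i ∧ (T.stair (t + 1)).1 = i' := by
  obtain ⟨t, ht, hi, hi'⟩ := Nat.exists_lt_eq_and_succ_eq (f := fun t => ((T.stair t).1 : ℕ))
    (i := i) (n := T.stairLength) T.coe_stair_fst_succ_le (by simp [T.coe_stair_zero])
    (by simp [T.coe_stair_stairLength]; omega)
  exact ⟨t, ht.le, Fin.ext hi, Fin.ext (hi'.trans h)⟩

theorem exists_stair_snd_step {j j' : Fin T.l} (h : (j : ℕ) + 1 = j') :
    ∃ t ≤ T.stairLength, (T.stair t).2 = j ∧ (T.stair (t + 1)).2 = j' := by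
  obtain ⟨t, ht, hj, hj'⟩ := Nat.exists_lt_eq_and_succ_eq (f := fun t => ((T.stair t).2 : ℕ))
    (i := j) (n := T.stairLength) T.coe_stair_snd_succ_le (by simp [T.coe_stair_zero])
    (by simp [T.coe_stair_stairLength]; omega)
  exact ⟨t, ht.le, Fin.ext hj, Fin.ext (hj'.trans h)⟩

variable [LinearOrder V]

/-- Ordered lexicographically, the bag `(t, m)` of the middle vertex `m` of a long chord at the
point of time `t` comes before the bag `(t, ⊤)` of the step from time `t` to `t + 1`. -/
noncomputable def bag : ℕ → WithTop V → Finset V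
  | t, ⊤ =>
    {T.p (T.stair t).1, T.q (T.stair t).2, T.p (T.stair (t + 1)).1, T.q (T.stair (t + 1)).2}
  | t, (m : V) => {T.p (T.stair t).1, T.q (T.stair t).2, m}

noncomputable def bagIndex : Finset (ℕ ×ₗ WithTop V) :=
  (range (T.stairLength + 1)).image (fun t => toLex (t, ⊤)) ∪
    T.M_fin.toFinset.image fun m => toLex (((T.ends m).1 : ℕ) + (T.ends m).2, (m : WithTop V))

theorem mem_bagIndex {x : ℕ ×ₗ WithTop V} :
    x ∈ T.bagIndex ↔ (∃ t ≤ T.stairLength, toLex (t, ⊤) = x) ∨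
      ∃ m ∈ T.M, toLex (((T.ends m).1 : ℕ) + (T.ends m).2, (m : WithTop V)) = x := by
  simp [bagIndex]

theorem top_mem_bagIndex {t : ℕ} (ht : t ≤ T.stairLength) : toLex (t, ⊤) ∈ T.bagIndex :=
  T.mem_bagIndex.2 (Or.inl ⟨t, ht, rfl⟩)

theorem coe_mem_bagIndex {m : V} (hm : m ∈ T.M) :
    toLex (((T.ends m).1 : ℕ) + (T.ends m).2, (m : WithTop V)) ∈ T.bagIndex :=
  T.mem_bagIndex.2 (Or.inr ⟨m, hm, rfl⟩)

theorem card_bag_le {x : ℕ ×ₗ WithTop V} (hx : x ∈ T.bagIndex) :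
    #(T.bag (ofLex x).1 (ofLex x).2) ≤ 3 := by
  rcases T.mem_bagIndex.1 hx with ⟨t, -, rfl⟩ | ⟨m, -, rfl⟩
  · rcases T.stair_succ t with ⟨h, -⟩ | ⟨-, h⟩
    · calc #(T.bag t ⊤)
          ≤ #{T.p (T.stair t).1, T.q (T.stair t).2, T.q (T.stair (t + 1)).2} :=
            card_le_card (by simp [bag, Fin.ext h, insert_subset_iff])
        _ ≤ 3 := card_le_three
    · calc #(T.bag t ⊤)
          ≤ #{T.p (T.stair t).1, T.q (T.stair t).2, T.p (T.stair (t + 1)).1} :=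
            card_le_card (by simp [bag, Fin.ext h, insert_subset_iff])
        _ ≤ 3 := card_le_three
  · exact card_le_three

theorem p_mem_bag_iff {x : ℕ ×ₗ WithTop V} (hx : x ∈ T.bagIndex) (i : Fin T.k) :
    T.p i ∈ T.bag (ofLex x).1 (ofLex x).2 ↔
      (T.stair (ofLex x).1).1 = i ∨ ((ofLex x).2 = ⊤ ∧ (T.stair ((ofLex x).1 + 1)).1 = i) := by
  rcases T.mem_bagIndex.1 hx with ⟨t, -, rfl⟩ | ⟨m, hm, rfl⟩
  · simp [bag, T.p_inj.eq_iff, T.p_ne_q, eq_comm]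
  · simp [bag, T.p_inj.eq_iff, T.p_ne_q, eq_comm, T.M_ne_p hm]

theorem q_mem_bag_iff {x : ℕ ×ₗ WithTop V} (hx : x ∈ T.bagIndex) (j : Fin T.l) :
    T.q j ∈ T.bag (ofLex x).1 (ofLex x).2 ↔
      (T.stair (ofLex x).1).2 = j ∨ ((ofLex x).2 = ⊤ ∧ (T.stair ((ofLex x).1 + 1)).2 = j) := by
  rcases T.mem_bagIndex.1 hx with ⟨t, -, rfl⟩ | ⟨m, hm, rfl⟩
  · simp [bag, T.q_inj.eq_iff, (T.p_ne_q _ _).symm, eq_comm]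
  · simp [bag, T.q_inj.eq_iff, (T.p_ne_q _ _).symm, eq_comm, T.M_ne_q hm]

theorem mem_bag_iff {x : ℕ ×ₗ WithTop V} (hx : x ∈ T.bagIndex) {m : V} (hm : m ∈ T.M) :
    m ∈ T.bag (ofLex x).1 (ofLex x).2 ↔
      x = toLex (((T.ends m).1 : ℕ) + (T.ends m).2, (m : WithTop V)) := by
  rcases T.mem_bagIndex.1 hx with ⟨t, -, rfl⟩ | ⟨m', -, rfl⟩
  · simp [bag, T.M_ne_p hm, T.M_ne_q hm]
  · simp only [bag, ofLex_toLex, mem_insert, mem_singleton, T.M_ne_p hm, T.M_ne_q hm, false_or,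
      toLex_inj, Prod.mk.injEq, WithTop.coe_inj]
    exact ⟨fun h => h ▸ ⟨rfl, rfl⟩, fun h => h.2.symm⟩

theorem exists_mem_bag (v : V) : ∃ x ∈ T.bagIndex, v ∈ T.bag (ofLex x).1 (ofLex x).2 := by
  rcases T.vert_cover v with ⟨i, rfl⟩ | ⟨j, rfl⟩ | hm
  · obtain ⟨t, ht, hi⟩ := T.exists_stair_fst_eq i
    exact ⟨_, T.top_mem_bagIndex ht, by simp [bag, hi]⟩
  · obtain ⟨t, ht, hj⟩ := T.exists_stair_snd_eq j
    exact ⟨_, T.top_mem_bagIndex ht, by simp [bag, hj]⟩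
  · exact ⟨_, T.coe_mem_bagIndex hm, by simp [bag]⟩

theorem exists_adj_mem_bag ⦃u w : V⦄ (h : G.Adj u w) :
    ∃ x ∈ T.bagIndex,
      u ∈ T.bag (ofLex x).1 (ofLex x).2 ∧ w ∈ T.bag (ofLex x).1 (ofLex x).2 := by
  rcases (T.adj_iff u w).1 h with
    ⟨i, i', hii' | hii', rfl, rfl⟩ | ⟨j, j', hjj' | hjj', rfl, rfl⟩ | ⟨c, hc, huw⟩ | ⟨m, hm, huw⟩
  · obtain ⟨t, ht, hi, hi'⟩ := T.exists_stair_fst_step hii'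
    exact ⟨_, T.top_mem_bagIndex ht, by simp [bag, hi, hi']⟩
  · obtain ⟨t, ht, hi', hi⟩ := T.exists_stair_fst_step hii'
    exact ⟨_, T.top_mem_bagIndex ht, by simp [bag, hi, hi']⟩
  · obtain ⟨t, ht, hj, hj'⟩ := T.exists_stair_snd_step hjj'
    exact ⟨_, T.top_mem_bagIndex ht, by simp [bag, hj, hj']⟩
  · obtain ⟨t, ht, hj', hj⟩ := T.exists_stair_snd_step hjj'
    exact ⟨_, T.top_mem_bagIndex ht, by simp [bag, hj, hj']⟩
  · have hstair := T.stair_of_mem (Or.inl hc)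
    refine ⟨_, T.top_mem_bagIndex (T.coe_add_coe_le_stairLength c), ?_⟩
    rcases huw with ⟨rfl, rfl⟩ | ⟨rfl, rfl⟩ <;> simp [bag, hstair]
  · have hstair := T.stair_of_mem (Or.inr ⟨m, hm, rfl⟩)
    refine ⟨_, T.coe_mem_bagIndex hm, ?_⟩
    rcases huw with ⟨rfl, rfl | rfl⟩ | ⟨rfl, rfl | rfl⟩ <;> simp [bag, hstair]

/-- For `p i` and `q j` by monotonicity of the staircase; a middle vertex lies in a single bag. -/
theorem mem_bag_of_le_of_le {x y z : ℕ ×ₗ WithTop V}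
    (hx : x ∈ T.bagIndex) (hy : y ∈ T.bagIndex) (hz : z ∈ T.bagIndex) (hxy : x ≤ y) (hyz : y ≤ z)
    {v : V} (hvx : v ∈ T.bag (ofLex x).1 (ofLex x).2)
    (hvz : v ∈ T.bag (ofLex z).1 (ofLex z).2) :
    v ∈ T.bag (ofLex y).1 (ofLex y).2 := by
  suffices ∃ U : Set (ℕ ×ₗ WithTop V), U.OrdConnected ∧
      ∀ x ∈ T.bagIndex, v ∈ T.bag (ofLex x).1 (ofLex x).2 ↔ x ∈ U by
    obtain ⟨U, hU, hvU⟩ := this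
    exact (hvU y hy).2 (hU.out ((hvU x hx).1 hvx) ((hvU z hz).1 hvz) ⟨hxy, hyz⟩)
  rcases T.vert_cover v with ⟨i, rfl⟩ | ⟨j, rfl⟩ | hm
  · exact ⟨_, (monotone_fst.comp T.monotone_stair).ordConnected_setOf_lex i,
      fun x hx => T.p_mem_bag_iff hx i⟩
  · exact ⟨_, (monotone_snd.comp T.monotone_stair).ordConnected_setOf_lex j,
      fun x hx => T.q_mem_bag_iff hx j⟩
  · exact ⟨_, Set.ordConnected_singleton, fun x hx => T.mem_bag_iff hx hm⟩

end TrackRep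

theorem pathWidth_le_two_of_isTrack_general {V : Type u} (G : SimpleGraph V)
    (h : IsTrack G) : pathWidth G ≤ 2 := by
  obtain ⟨T⟩ := h
  let _ : LinearOrder V := IsWellOrder.linearOrder WellOrderingRel
  exact pathWidth_le_of_bags T.bagIndex (fun x => T.bag (ofLex x).1 (ofLex x).2)
    T.exists_mem_bag T.exists_adj_mem_bag
    (fun x hx y hy z hz hxy hyz _ => T.mem_bag_of_le_of_le hx hy hz hxy hyz)
    fun x hx => T.card_bag_le hx

/-- Every track has path-width at most 2. -/
theorem pathWidth_le_two_of_isTrack {V : Type u} [Fintype V] (G : SimpleGraph V)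
    (h : IsTrack G) : pathWidth G ≤ 2 :=
  pathWidth_le_two_of_isTrack_general G h
end

section
/- Let G be a 2-connected finite simple graph with path-width at most 2 and let C be a longest cycle of G. Then every bridge of C has exactly two legs. -/
/-!
A chord of `C` has its two ends as legs. A component `N` of `G - V(C)` has at least two legs,
since for every vertex `v` of `C` the graph `G - v` still joins `N` to the rest of `C`. If `N`
had three legs, cutting `C` just before the second and the third one would split it into three
arcs which, together with `N`, are the branch sets of a `K₄`-minor. This is impossible in
path-width at most `2`: the bags meeting a connected set form an interval, two adjacent branch sets give
overlapping intervals, so by the one-dimensional Helly property some bag meets all four branch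
sets and has at least four vertices.
-/

open SimpleGraph

universe u v

theorem Set.OrdConnected.nonempty_iInter {α ι : Type*} [LinearOrder α] [WellFoundedLT α]
    [Finite ι] [Nonempty ι] {s : ι → Set α} (hs : ∀ i, (s i).OrdConnected)
    (hst : ∀ i j, (s i ∩ s j).Nonempty) : (⋂ i, s i).Nonempty := by
  have hne (i : ι) : (s i).Nonempty := (hst i i).mono Set.inter_subset_left
  let m (i : ι) : α := wellFounded_lt.min (s i) (hne i)
  obtain ⟨i₀, hi₀⟩ := Finite.exists_max m
  refine ⟨m i₀, Set.mem_iInter.2 fun i => ?_⟩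
  obtain ⟨y, hyi, hyi₀⟩ := hst i i₀
  exact (hs i).out (wellFounded_lt.min_mem _ _) hyi ⟨hi₀ i, wellFounded_lt.min_le hyi₀⟩

def IsCliqueModel {V : Type u} {ι : Type v} (G : SimpleGraph V) (B : ι → Set V) : Prop :=
  (∀ i, (G.induce (B i)).Connected) ∧ Pairwise (fun i j => Disjoint (B i) (B j)) ∧
    Pairwise fun i j => ∃ u ∈ B i, ∃ v ∈ B j, G.Adj u v

section CliqueModel

variable {V : Type u} {ι : Type v} {G : SimpleGraph V}

theorem isMinor_top_iff : IsMinor G (⊤ : SimpleGraph ι) ↔ ∃ B : ι → Set V, IsCliqueModel G B := by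
  refine exists_congr fun B => ⟨fun ⟨_, hdisj, hconn, hadj⟩ => ⟨hconn, hdisj, fun i j h => hadj h⟩,
    fun ⟨hconn, hdisj, hadj⟩ => ⟨fun i => Set.nonempty_coe_sort.1 (hconn i).nonempty, hdisj,
      hconn, fun i j h => hadj h⟩⟩

theorem IsCliqueModel.option {B : ι → Set V} (hB : IsCliqueModel G B) {N : Set V}
    (hN : (G.induce N).Connected) (hdisj : ∀ i, Disjoint N (B i))
    (hadj : ∀ i, ∃ u ∈ N, ∃ v ∈ B i, G.Adj u v) :
    IsCliqueModel G fun o : Option ι => o.elim N B := by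
  obtain ⟨hconn, hBdisj, hBadj⟩ := hB
  refine ⟨fun o => o.rec hN hconn, ?_, ?_⟩
  · rintro (_ | i) (_ | j) hij
    · exact absurd rfl hij
    · exact hdisj j
    · exact (hdisj i).symm
    · exact hBdisj (Option.some_injective _ |>.ne_iff.1 hij)
  · rintro (_ | i) (_ | j) hij
    · exact absurd rfl hij
    · exact hadj j
    · obtain ⟨u, hu, v, hv, huv⟩ := hadj i
      exact ⟨v, hv, u, hu, huv.symm⟩
    · exact hBadj (Option.some_injective _ |>.ne_iff.1 hij)

end CliqueModel

namespace PathDecomp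

variable {V : Type u} {G : SimpleGraph V} (D : PathDecomp G)

theorem exists_mem_support_mem_bag {a b : V} (p : G.Walk a b) {i j k : Fin D.n} (hij : i ≤ j)
    (hjk : j ≤ k) (ha : a ∈ D.bag i) (hb : b ∈ D.bag k) : ∃ z ∈ p.support, z ∈ D.bag j := by
  induction p generalizing i with
  | nil => exact ⟨_, Walk.start_mem_support _, D.interp i j k hij hjk _ ha hb⟩
  | @cons a c b hac q ih =>
    by_cases haj : a ∈ D.bag j
    · exact ⟨a, Walk.start_mem_support _, haj⟩
    obtain ⟨m, ham, hcm⟩ := D.edge_bag hac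
    have hmj : m ≤ j := le_of_not_ge fun hjm => haj (D.interp i j m hij hjm _ ha ham)
    obtain ⟨z, hz, hzj⟩ := ih hmj hcm hb
    exact ⟨z, List.mem_cons_of_mem _ hz, hzj⟩

theorem ordConnected_setOf_bag_meets {S : Set V} (hS : (G.induce S).Preconnected) :
    {k | ∃ v ∈ S, v ∈ D.bag k}.OrdConnected := by
  refine ⟨fun i ⟨a, ha, hai⟩ k ⟨b, hb, hbk⟩ j ⟨hij, hjk⟩ => ?_⟩
  obtain ⟨p⟩ := hS ⟨a, ha⟩ ⟨b, hb⟩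
  obtain ⟨z, hz, hzj⟩ := D.exists_mem_support_mem_bag (p.map (Embedding.induce S).toHom) hij hjk
    hai hbk
  rw [Walk.support_map, List.mem_map] at hz
  obtain ⟨z, -, rfl⟩ := hz
  exact ⟨z, z.2, hzj⟩

theorem exists_bag_meets_of_isCliqueModel {ι : Type v} [Finite ι] [Nonempty ι]
    {B : ι → Set V} (hB : IsCliqueModel G B) : ∃ k, ∀ i, ∃ v ∈ B i, v ∈ D.bag k := by
  obtain ⟨hconn, -, hadj⟩ := hB
  have hmeet (i j : ι) : ∃ k, (∃ v ∈ B i, v ∈ D.bag k) ∧ ∃ v ∈ B j, v ∈ D.bag k := by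
    obtain rfl | hij := eq_or_ne i j
    · obtain ⟨v, hv⟩ := (hconn i).nonempty
      obtain ⟨k, hk⟩ := D.mem_bag v
      exact ⟨k, ⟨v, hv, hk⟩, ⟨v, hv, hk⟩⟩
    · obtain ⟨u, hu, v, hv, huv⟩ := hadj hij
      obtain ⟨k, huk, hvk⟩ := D.edge_bag huv
      exact ⟨k, ⟨u, hu, huk⟩, ⟨v, hv, hvk⟩⟩
  simpa using Set.OrdConnected.nonempty_iInter
    (fun i => D.ordConnected_setOf_bag_meets (hconn i).preconnected) hmeet

theorem card_bag_le_width_add_one (k : Fin D.n) : (D.bag k).card ≤ D.width + 1 := by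
  have := Finset.le_sup (f := fun i => (D.bag i).card) (Finset.mem_univ k)
  unfold width
  omega

theorem card_le_width_add_one_of_isMinor_top {ι : Type v} [Fintype ι]
    (h : IsMinor G (⊤ : SimpleGraph ι)) : Fintype.card ι ≤ D.width + 1 := by
  cases isEmpty_or_nonempty ι
  · simp
  obtain ⟨B, hB⟩ := isMinor_top_iff.1 h
  obtain ⟨k, hk⟩ := D.exists_bag_meets_of_isCliqueModel hB
  choose v hvB hvk using hk
  have hinj : Function.Injective v := fun i j hij =>
    by_contra fun hne => Set.disjoint_left.1 (hB.2.1 hne) (hvB i) (hij ▸ hvB j)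
  calc Fintype.card ι ≤ (D.bag k).card :=
        Finset.card_le_card_of_injOn v (fun i _ => hvk i) hinj.injOn
    _ ≤ D.width + 1 := D.card_bag_le_width_add_one k

end PathDecomp

theorem exists_pathDecomp_width_eq_pathWidth {V : Type u} [Finite V] (G : SimpleGraph V) :
    ∃ D : PathDecomp G, D.width = pathWidth G := by
  have := Fintype.ofFinite V
  let trivialDecomp : PathDecomp G :=
    ⟨1, fun _ => Finset.univ, fun v => ⟨0, Finset.mem_univ v⟩,
      fun u w _ => ⟨0, Finset.mem_univ u, Finset.mem_univ w⟩,
      fun _ _ _ _ _ v _ _ => Finset.mem_univ v⟩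
  exact Nat.sInf_mem (s := {w | ∃ D : PathDecomp G, D.width = w}) ⟨_, trivialDecomp, rfl⟩

theorem card_le_pathWidth_add_one_of_isMinor_top {V : Type u} [Finite V] {G : SimpleGraph V}
    {ι : Type v} [Fintype ι] (h : IsMinor G (⊤ : SimpleGraph ι)) :
    Fintype.card ι ≤ pathWidth G + 1 := by
  obtain ⟨D, hD⟩ := exists_pathDecomp_width_eq_pathWidth G
  exact hD ▸ D.card_le_width_add_one_of_isMinor_top h

theorem pairwise_fin_three {r : Fin 3 → Fin 3 → Prop} (hr : ∀ i j, r i j → r j i)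
    (h₀₁ : r 0 1) (h₀₂ : r 0 2) (h₁₂ : r 1 2) : Pairwise r := by
  intro i j hij
  fin_cases i <;> fin_cases j <;> first | exact absurd rfl hij | assumption | exact hr _ _ ‹_›

section CyclicList

variable {V : Type u} {G : SimpleGraph V}

theorem connected_induce_of_isChain {l : List V} (hl : l ≠ []) (h : l.IsChain G.Adj) :
    (G.induce {v | v ∈ l}).Connected := by
  have := (Walk.ofSupport l hl h).connected_induce_support
  rwa [Walk.support_ofSupport] at this

theorem exists_adj_of_isChain_append {l₁ l₂ : List V} (h : (l₁ ++ l₂).IsChain G.Adj)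
    (h₁ : l₁ ≠ []) (h₂ : l₂ ≠ []) : ∃ u ∈ l₁, ∃ v ∈ l₂, G.Adj u v :=
  ⟨_, List.getLast_mem h₁, _, List.head_mem h₂, (List.isChain_append.1 h).2.2 _
    (by simp [List.getLast?_eq_some_getLast h₁]) _ (by simp [List.head?_eq_some_head h₂])⟩

/-- The list `x :: (l₁ ++ l₂ ++ l₃)`, whose last entry is again `x`, traces a cycle; its three
arcs `l₁`, `l₂`, `l₃` are the branch sets of a triangle. -/
theorem isCliqueModel_of_cyclic_split {x : V} {l₁ l₂ l₃ : List V}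
    (hchain : (x :: (l₁ ++ l₂ ++ l₃)).IsChain G.Adj) (hlast : l₃.getLast? = some x)
    (hnd : (l₁ ++ l₂ ++ l₃).Nodup) (h₁ : l₁ ≠ []) (h₂ : l₂ ≠ []) :
    IsCliqueModel G ![{v | v ∈ l₁}, {v | v ∈ l₂}, {v | v ∈ l₃}] := by
  have h₃ : l₃ ≠ [] := by rintro rfl; simp at hlast
  have hL : (l₁ ++ l₂ ++ l₃).IsChain G.Adj := hchain.tail
  have c₁₂ : (l₁ ++ l₂).IsChain G.Adj := hL.prefix (List.prefix_append _ _)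
  have c₂₃ : (l₂ ++ l₃).IsChain G.Adj := hL.suffix (by simp)
  have c₃₁ : ([x] ++ l₁).IsChain G.Adj := hchain.prefix (by simp)
  obtain ⟨hnd₁₂, -, d₃⟩ := List.nodup_append.1 hnd
  obtain ⟨-, -, d₁₂⟩ := List.nodup_append.1 hnd₁₂
  refine ⟨fun t => ?_, pairwise_fin_three (fun i j h => h.symm) ?_ ?_ ?_,
    pairwise_fin_three (fun i j ⟨u, hu, v, hv, huv⟩ => ⟨v, hv, u, hu, huv.symm⟩) ?_ ?_ ?_⟩
  · fin_cases t
    · exact connected_induce_of_isChain h₁ (c₁₂.prefix (List.prefix_append _ _))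
    · exact connected_induce_of_isChain h₂ (c₂₃.prefix (List.prefix_append _ _))
    · exact connected_induce_of_isChain h₃ (c₂₃.suffix (List.suffix_append _ _))
  · exact Set.disjoint_left.2 fun v h h' => d₁₂ v h v h' rfl
  · exact Set.disjoint_left.2 fun v h h' => d₃ v (List.mem_append_left _ h) v h' rfl
  · exact Set.disjoint_left.2 fun v h h' => d₃ v (List.mem_append_right _ h) v h' rfl
  · exact exists_adj_of_isChain_append c₁₂ h₁ h₂
  · obtain ⟨u, hu, v, hv, huv⟩ := exists_adj_of_isChain_append c₃₁ (List.cons_ne_nil _ _) h₁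
    rw [List.mem_singleton.1 hu] at huv
    exact ⟨v, hv, x, List.mem_of_getLast? hlast, huv.symm⟩
  · exact exists_adj_of_isChain_append c₂₃ h₂ h₃

theorem exists_isCliqueModel_of_cyclic {x : V} {L : List V} (hchain : (x :: L).IsChain G.Adj)
    (hlast : L.getLast? = some x) (hnd : L.Nodup) {i j k : ℕ} (hij : i < j) (hjk : j < k)
    (hk : k < L.length) :
    ∃ A : Fin 3 → Set V, IsCliqueModel G A ∧ (∀ t, A t ⊆ {v | v ∈ L}) ∧
      L[i] ∈ A 0 ∧ L[j] ∈ A 1 ∧ L[k] ∈ A 2 := by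
  set l₁ := L.take j
  set l₂ := (L.drop j).take (k - j)
  set l₃ := L.drop k
  have hsplit : l₁ ++ l₂ ++ l₃ = L := by
    rw [List.append_assoc, show l₃ = (L.drop j).drop (k - j) by
      rw [List.drop_drop, Nat.add_sub_cancel' hjk.le], List.take_append_drop, List.take_append_drop]
  have hlast₃ : l₃.getLast? = some x := by
    rw [List.getLast?_drop, if_neg (by omega), hlast]
  rw [← hsplit] at hchain hnd
  refine ⟨_, isCliqueModel_of_cyclic_split hchain hlast₃ hnd
    (List.ne_nil_of_length_pos (by simp [l₁]; omega))
    (List.ne_nil_of_length_pos (by simp [l₂]; omega)), fun t v hv => ?_, ?_, ?_, ?_⟩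
  · fin_cases t
    · exact List.take_subset _ _ hv
    · exact List.drop_subset _ _ (List.take_subset _ _ hv)
    · exact List.drop_subset _ _ hv
  · exact List.mem_iff_getElem.2 ⟨i, by simp [l₁]; omega, List.getElem_take⟩
  · exact List.mem_iff_getElem.2 ⟨0, by simp [l₂]; omega, by simp [l₂]⟩
  · exact List.mem_iff_getElem.2 ⟨0, by simp [l₃]; omega, by simp [l₃]⟩

end CyclicList

theorem SimpleGraph.Walk.IsCycle.exists_isCliqueModel {V : Type u} {G : SimpleGraph V} {x : V}
    {C : G.Walk x x} (hC : C.IsCycle) {T : Set V} (hT : ∀ v ∈ T, v ∈ C.support)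
    (h3 : 2 < T.ncard) :
    ∃ A : Fin 3 → Set V, IsCliqueModel G A ∧ (∀ t, A t ⊆ {v | v ∈ C.support}) ∧
      ∀ t, (A t ∩ T).Nonempty := by
  classical
  set L := C.support.tail
  have hchain : (x :: L).IsChain G.Adj := C.cons_tail_support ▸ C.isChain_adj_support
  have hlast : L.getLast? = some x := by
    simp [L, List.getLast?_tail, hC.not_nil, List.getLast?_eq_some_getLast C.support_ne_nil]
  have hmem (v : V) : v ∈ C.support ↔ v ∈ L := by
    rw [C.mem_support_iff, or_iff_right_of_imp (· ▸ C.end_mem_tail_support hC.not_nil)]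
  have hL (v : V) (hv : v ∈ T) : v ∈ L := (hmem v).1 (hT v hv)
  have hidx : ∀ v ∈ T, ∀ n, n = L.idxOf v → ∃ h : n < L.length, L[n] ∈ T := by
    rintro v hv _ rfl
    exact ⟨List.idxOf_lt_length_iff.2 (hL v hv), by rwa [List.getElem_idxOf]⟩
  obtain ⟨a, b, c, ha, hb, hc, hab, hac, hbc⟩ :=
    (Set.two_lt_ncard_iff (C.support.finite_toSet.subset hT)).1 h3
  let S : Finset ℕ := {L.idxOf a, L.idxOf b, L.idxOf c}
  have hS : S.card = 3 := Finset.card_eq_three.2 ⟨_, _, _,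
    fun h => hab ((List.idxOf_inj (hL a ha)).1 h), fun h => hac ((List.idxOf_inj (hL a ha)).1 h),
    fun h => hbc ((List.idxOf_inj (hL b hb)).1 h), rfl⟩
  let f := S.orderEmbOfFin hS
  have hfT (t : Fin 3) : ∃ h : f t < L.length, L[f t] ∈ T := by
    have := S.orderEmbOfFin_mem hS t
    simp only [S, Finset.mem_insert, Finset.mem_singleton] at this
    rcases this with h | h | h
    exacts [hidx a ha _ h, hidx b hb _ h, hidx c hc _ h]
  obtain ⟨_, hT₀⟩ := hfT 0
  obtain ⟨_, hT₁⟩ := hfT 1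
  obtain ⟨hk, hT₂⟩ := hfT 2
  obtain ⟨A, hA, hAL, h₀, h₁, h₂⟩ := exists_isCliqueModel_of_cyclic hchain hlast hC.support_nodup
    (f.strictMono (by decide : (0 : Fin 3) < 1)) (f.strictMono (by decide : (1 : Fin 3) < 2)) hk
  refine ⟨A, hA, fun t v hv => (hmem v).2 (hAL t hv), fun t => ?_⟩
  fin_cases t
  exacts [⟨_, h₀, hT₀⟩, ⟨_, h₁, hT₁⟩, ⟨_, h₂, hT₂⟩]

section Bridge

variable {V : Type u} {G : SimpleGraph V} {x : V} {C : G.Walk x x}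

theorem legs_bridgeFromComp {N : Set V} (hN : N ⊆ {a | a ∈ C.support}ᶜ) :
    legs C (bridgeFromComp G N) = {z | z ∈ C.support ∧ ∃ y ∈ N, G.Adj z y} := by
  ext z
  refine ⟨fun ⟨⟨y, hzy, hzN⟩, hz⟩ => ⟨hz, y, hzN.resolve_left fun h => hN h hz, hzy⟩,
    fun ⟨hz, y, hy, hzy⟩ => ⟨⟨y, hzy, Or.inr hy⟩, hz⟩⟩

theorem legs_subgraphOfAdj {a b : V} (h : G.Adj a b) (ha : a ∈ C.support)
    (hb : b ∈ C.support) : legs C (G.subgraphOfAdj h) = {a, b} := by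
  ext z
  simp only [legs, subgraphOfAdj_verts, Set.mem_insert_iff, Set.mem_singleton_iff,
    Set.mem_ofPred_eq]
  grind

theorem IsCompOf.exists_adj_ne {S N : Set V} (hN : IsCompOf G S N) {v w : V} (hvN : v ∉ N)
    (hw : w ∈ S) (hwv : w ≠ v) (hv : (G.induce {v}ᶜ).Connected) :
    ∃ t ∈ S, t ≠ v ∧ ∃ y ∈ N, G.Adj t y := by
  obtain ⟨⟨n, hn⟩, hNS, -, hNclosed⟩ := hN
  obtain ⟨p⟩ := hv.preconnected ⟨n, fun h => hvN (h ▸ hn)⟩ ⟨w, hwv⟩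
  let q := p.map (Embedding.induce {v}ᶜ).toHom
  obtain ⟨d, hd, hdN, hdN'⟩ := q.exists_boundary_dart N hn fun h => hNS h hw
  have hdv : d.snd ≠ v := by
    have := q.dart_snd_mem_support_of_mem_darts hd
    rw [Walk.support_map, List.mem_map] at this
    obtain ⟨z, -, hz⟩ := this
    exact hz ▸ z.2
  exact ⟨d.snd, by_contra fun h => hdN' (hNclosed _ hdN _ h d.adj), hdv, d.fst, hdN, d.adj.symm⟩

theorem one_lt_ncard_legs_bridgeFromComp (h2 : ∀ v, (G.induce ({v}ᶜ : Set V)).Connected)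
    (hC : C.IsCycle) {N : Set V} (hN : IsCompOf G {a | a ∈ C.support} N) :
    1 < (legs C (bridgeFromComp G N)).ncard := by
  have hsnd : C.snd ∈ C.support := C.getVert_mem_support 1
  have hCN (v : V) (hv : v ∈ C.support) : v ∉ N := fun h => hN.2.1 h hv
  obtain ⟨t₁, ht₁, ht₁x, ht₁N⟩ := hN.exists_adj_ne (hCN x C.start_mem_support) hsnd
    (C.adj_snd hC.not_nil).ne.symm (h2 x)
  obtain ⟨t₂, ht₂, ht₂₁, ht₂N⟩ :=
    hN.exists_adj_ne (hCN t₁ ht₁) C.start_mem_support ht₁x.symm (h2 t₁)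
  rw [legs_bridgeFromComp hN.2.1]
  exact (Set.one_lt_ncard (C.support.finite_toSet.subset fun _ h => h.1)).2
    ⟨t₂, ⟨ht₂, ht₂N⟩, t₁, ⟨ht₁, ht₁N⟩, ht₂₁⟩

theorem ncard_legs_bridgeFromComp_le_two [Finite V] (hpw : pathWidth G ≤ 2) (hC : C.IsCycle)
    {N : Set V} (hN : IsCompOf G {a | a ∈ C.support} N) :
    (legs C (bridgeFromComp G N)).ncard ≤ 2 := by
  by_contra! h3
  rw [legs_bridgeFromComp hN.2.1] at h3
  obtain ⟨A, hA, hAC, hAT⟩ := hC.exists_isCliqueModel (fun v hv => hv.1) h3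
  have hK₄ : IsMinor G (⊤ : SimpleGraph (Option (Fin 3))) := isMinor_top_iff.2
    ⟨_, hA.option hN.2.2.1 (fun t => Set.disjoint_left.2 fun v hv hvA => hN.2.1 hv (hAC t hvA))
      fun t => by
        obtain ⟨v, hvA, -, y, hy, hvy⟩ := hAT t
        exact ⟨y, hy, v, hvA, hvy.symm⟩⟩
  have := card_le_pathWidth_add_one_of_isMinor_top hK₄
  simp only [Fintype.card_option, Fintype.card_fin] at this
  omega

end Bridge

theorem bridge_has_two_legs_general {V : Type u} (G : SimpleGraph V)
    (h2 : TwoConnected G) (hpw : pathWidth G ≤ 2) {x : V} (C : G.Walk x x)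
    (hC : IsLongestCycle G C) (B : G.Subgraph) (hB : IsBridgeOf G C B) :
    (legs C B).ncard = 2 := by
  have : Finite V := Nat.finite_of_card_ne_zero (by have := h2.1; omega)
  rcases hB with ⟨N, hN, rfl⟩ | ⟨a, b, hab, ha, hb, -, rfl⟩
  · have hlower := one_lt_ncard_legs_bridgeFromComp h2.2 hC.1 hN
    have hupper := ncard_legs_bridgeFromComp_le_two hpw hC.1 hN
    omega
  · rw [legs_subgraphOfAdj hab ha hb, Set.ncard_pair hab.ne]

/-- Let `G` be a 2-connected finite simple graph with path-width at most 2 and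
let `C` be a longest cycle of `G`. Then every bridge of `C` has exactly two legs. -/
theorem bridge_has_two_legs {V : Type u} [Fintype V] (G : SimpleGraph V)
    (h2 : TwoConnected G) (hpw : pathWidth G ≤ 2) {x : V} (C : G.Walk x x)
    (hC : IsLongestCycle G C) (B : G.Subgraph) (hB : IsBridgeOf G C B) :
    (legs C B).ncard = 2 :=
  bridge_has_two_legs_general G h2 hpw C hC B hB
end
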